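/- Let X and Y be nontrivial real Banach spaces, let H be a closed linear subspace of L(X,Y) containing all finite rank operators, and let δ > 0. If H (with the induced operator norm) is δ-rough and the dual space X* is non-rough, then Y is δ-rough. -/

import Mathlib

/-!
Suppose `Y` is not `δ`-rough at a unit vector `y₀`. As `X*` is non-rough, some unit functional `f`
satisfies `‖f + g‖ + ‖f - g‖ ≤ 2 + κ‖g‖` for small `g`, with `κ` as small as we like; testing this
against a functional norming `x₁ - x₂` shows that a thin slice `{x ∈ B_X | f x > 1 - τ}` has
diameter at most `2κ`. Roughness of `H` at the rank-one operator `T = f ⊗ y₀` yields a small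
`S ∈ H` with `‖T + S‖ + ‖T - S‖ - 2 ≥ (δ - κ)‖S‖`. Both `T + S` and `T - S` almost attain their
norms on that slice, hence almost at a common point `x`, and there the left-hand side is at most
`‖y₀ + S x‖ + ‖y₀ - S x‖ - 2 + 5κ‖S‖`, contradicting the non-roughness of `Y` at `y₀`.
-/

open scoped BigOperators

/-- A Banach space `Z` is `δ`-average rough. -/
def IsAverageRough (Z : Type*) [NormedAddCommGroup Z] (δ : ℝ) : Prop :=
  ∀ n : ℕ, 0 < n → ∀ x : Fin n → Z, (∀ i, ‖x i‖ = 1) →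
    ∀ ε > (0 : ℝ), ∀ η > (0 : ℝ), ∃ y : Z, 0 < ‖y‖ ∧ ‖y‖ < η ∧
      (δ - ε) * ‖y‖ ≤ (1 / (n : ℝ)) * ∑ i, (‖x i + y‖ + ‖x i - y‖) - 2

/-- A Banach space `Z` is `δ`-rough. -/
def IsRough (Z : Type*) [NormedAddCommGroup Z] (δ : ℝ) : Prop :=
  ∀ x : Z, ‖x‖ = 1 →
    ∀ ε > (0 : ℝ), ∀ η > (0 : ℝ), ∃ y : Z, 0 < ‖y‖ ∧ ‖y‖ < η ∧
      (δ - ε) * ‖y‖ ≤ ‖x + y‖ + ‖x - y‖ - 2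

/-- A Banach space `Z` is non-rough if it is `ε`-rough for no `ε > 0`. -/
def NonRough (Z : Type*) [NormedAddCommGroup Z] : Prop :=
  ¬ ∃ ε > (0 : ℝ), IsRough Z ε

/-- A Banach space `Z` is octahedral. -/
def Octahedral (Z : Type*) [NormedAddCommGroup Z] : Prop :=
  ∀ (n : ℕ) (x : Fin n → Z), (∀ i, ‖x i‖ = 1) →
    ∀ ε > (0 : ℝ), ∃ y : Z, ‖y‖ = 1 ∧ ∀ i, 2 - ε ≤ ‖x i + y‖

/-- A Banach space `Z` is alternatively octahedral. -/
def AlternativelyOctahedral (Z : Type*) [NormedAddCommGroup Z] : Prop :=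
  ∀ (n : ℕ) (x : Fin n → Z), (∀ i, ‖x i‖ = 1) →
    ∀ ε > (0 : ℝ), ∃ y : Z, ‖y‖ = 1 ∧ ∀ i, 2 - ε ≤ max ‖x i + y‖ ‖x i - y‖

/-- A Banach space `X` is weakly `δ`-average rough: every non-empty relatively weak*
open subset of the closed unit ball of the dual has diameter at least `δ`. -/
def WeaklyAverageRough (X : Type*) [NormedAddCommGroup X] [NormedSpace ℝ X] (δ : ℝ) : Prop :=
  ∀ V : Set (WeakDual ℝ X), IsOpen V →
    ∀ U : Set (StrongDual ℝ X),
      U = {f : StrongDual ℝ X | ‖f‖ ≤ 1} ∩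
            {f : StrongDual ℝ X | StrongDual.toWeakDual f ∈ V} →
      U.Nonempty → δ ≤ Metric.diam U

section Roughness

variable {Z : Type*} [NormedAddCommGroup Z]

lemma norm_add_add_norm_sub_le_of_forall_pos {x : Z} (hx : ‖x‖ = 1) {c η : ℝ}
    (h : ∀ y : Z, 0 < ‖y‖ → ‖y‖ < η → ‖x + y‖ + ‖x - y‖ - 2 < c * ‖y‖)
    {y : Z} (hy : ‖y‖ < η) : ‖x + y‖ + ‖x - y‖ ≤ 2 + c * ‖y‖ := by
  rcases (norm_nonneg y).eq_or_lt with hy0 | hy0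
  · simp [norm_eq_zero.1 hy0.symm, hx]
    norm_num
  · linarith [h y hy0 hy]

lemma exists_forall_norm_add_add_norm_sub_le_of_not_isRough {δ : ℝ} (h : ¬ IsRough Z δ) :
    ∃ x : Z, ‖x‖ = 1 ∧ ∃ η > 0, ∀ y : Z, ‖y‖ < η → ‖x + y‖ + ‖x - y‖ ≤ 2 + δ * ‖y‖ := by
  simp only [IsRough, not_forall, not_exists, not_and, not_le] at h
  obtain ⟨x, hx, ε, hε, η, hη, hlt⟩ := h
  refine ⟨x, hx, η, hη, fun y hy => ?_⟩
  have := norm_add_add_norm_sub_le_of_forall_pos hx hlt hy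
  nlinarith [norm_nonneg y]

lemma isRough_of_forall_le {δ : ℝ} (hδ : 0 < δ)
    (h : ∀ x : Z, ‖x‖ = 1 → ∀ ε > 0, ε ≤ δ → ∀ η > 0, ∃ y : Z, 0 < ‖y‖ ∧ ‖y‖ < η ∧
      (δ - ε) * ‖y‖ ≤ ‖x + y‖ + ‖x - y‖ - 2) :
    IsRough Z δ := by
  intro x hx ε hε η hη
  obtain ⟨y, hy₀, hyη, hy⟩ := h x hx (min ε δ) (lt_min hε hδ) (min_le_right ε δ) η hη
  exact ⟨y, hy₀, hyη, le_trans (by gcongr; exact min_le_left ε δ) hy⟩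

end Roughness

section Operators

variable {X Y : Type*} [NormedAddCommGroup X] [NormedSpace ℝ X]
  [NormedAddCommGroup Y] [NormedSpace ℝ Y]

lemma StrongDual.apply_le_norm (f : StrongDual ℝ X) {x : X} (hx : ‖x‖ ≤ 1) : f x ≤ ‖f‖ :=
  (le_abs_self _).trans (f.unit_le_opNorm x hx)

lemma StrongDual.add_add_mul_norm_sub_le {f : StrongDual ℝ X} {κ η : ℝ} (hκ : 0 ≤ κ)
    (hf : ∀ g : StrongDual ℝ X, ‖g‖ < η → ‖f + g‖ + ‖f - g‖ ≤ 2 + κ * ‖g‖)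
    {t : ℝ} (ht₀ : 0 ≤ t) (ht : t < η) {x₁ x₂ : X} (hx₁ : ‖x₁‖ ≤ 1) (hx₂ : ‖x₂‖ ≤ 1) :
    f x₁ + f x₂ + t * ‖x₁ - x₂‖ ≤ 2 + κ * t := by
  obtain ⟨u, hu, hux⟩ := exists_dual_vector'' ℝ (x₁ - x₂)
  have htu : ‖t • u‖ ≤ t := by
    rw [norm_smul, Real.norm_of_nonneg ht₀]
    exact mul_le_of_le_one_right ht₀ hu
  have h₁ : f x₁ + t * u x₁ ≤ ‖f + t • u‖ := by
    simpa using (f + t • u).apply_le_norm hx₁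
  have h₂ : f x₂ - t * u x₂ ≤ ‖f - t • u‖ := by
    simpa using (f - t • u).apply_le_norm hx₂
  have hsum := hf (t • u) (htu.trans_lt ht)
  rw [map_sub, RCLike.ofReal_real_eq_id, id] at hux
  nlinarith [mul_le_mul_of_nonneg_left htu hκ]

lemma ContinuousLinearMap.exists_lt_norm_apply_and_nonneg (A : X →L[ℝ] Y) (f : StrongDual ℝ X)
    {r : ℝ} (hr : r < ‖A‖) : ∃ x : X, ‖x‖ < 1 ∧ r < ‖A x‖ ∧ 0 ≤ f x := by
  obtain ⟨x, hx, hAx⟩ := A.exists_lt_apply_of_lt_opNorm hr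
  rcases le_or_gt 0 (f x) with hfx | hfx
  · exact ⟨x, hx, hAx, hfx⟩
  · exact ⟨-x, by rwa [norm_neg], by rwa [map_neg, norm_neg], by rw [map_neg]; linarith⟩

lemma ContinuousLinearMap.finiteDimensional_range_smulRight {f : StrongDual ℝ X} (hf : f ≠ 0)
    (y : Y) : FiniteDimensional ℝ (LinearMap.range (f.smulRight y : X →ₗ[ℝ] Y)) := by
  rw [ContinuousLinearMap.range_smulRight_apply hf]
  infer_instance

variable {f : StrongDual ℝ X} {y₀ : Y}

lemma exists_norm_smulRight_add_le (hf : ‖f‖ = 1) (hy₀ : ‖y₀‖ = 1) (S : X →L[ℝ] Y) {ν : ℝ}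
    (hν : 0 < ν) :
    ∃ x : X, ‖x‖ ≤ 1 ∧ 1 - (2 * ‖S‖ + ν) ≤ f x ∧
      ‖f.smulRight y₀ + S‖ ≤ ‖y₀ + S x‖ + (2 * ‖S‖ + ν) * ‖S‖ + ν := by
  obtain ⟨x, hx, hnorm, hfx₀⟩ := (f.smulRight y₀ + S).exists_lt_norm_apply_and_nonneg f
    (sub_lt_self _ hν)
  have happ : (f.smulRight y₀ + S) x = f x • y₀ + S x := by simp
  rw [happ] at hnorm
  have hfx₁ : f x ≤ 1 := hf ▸ f.apply_le_norm hx.le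
  have hSx : ‖S x‖ ≤ ‖S‖ := S.unit_le_opNorm x hx.le
  have hT : ‖f.smulRight y₀‖ = 1 := by
    rw [ContinuousLinearMap.norm_smulRight_apply, hf, hy₀, one_mul]
  have hlow : 1 - ‖S‖ ≤ ‖f.smulRight y₀ + S‖ := by
    simpa [hT] using norm_sub_le (f.smulRight y₀ + S) S
  have hup : ‖f x • y₀ + S x‖ ≤ f x + ‖S x‖ := by
    simpa [norm_smul, abs_of_nonneg hfx₀, hy₀] using norm_add_le (f x • y₀) (S x)
  have hfx : 1 - (2 * ‖S‖ + ν) ≤ f x := by linarith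
  refine ⟨x, hx.le, hfx, ?_⟩
  have hconv : ‖f x • y₀ + S x‖ ≤ f x * ‖y₀ + S x‖ + (1 - f x) * ‖S x‖ := by
    have := norm_add_le (f x • (y₀ + S x)) ((1 - f x) • S x)
    rw [norm_smul, norm_smul, Real.norm_of_nonneg hfx₀, Real.norm_of_nonneg (by linarith),
      smul_add, sub_smul, one_smul, add_add_sub_cancel] at this
    exact this
  nlinarith [norm_nonneg (y₀ + S x), norm_nonneg (S x), norm_nonneg S]

lemma exists_norm_smulRight_add_add_norm_smulRight_sub_le (hf : ‖f‖ = 1) (hy₀ : ‖y₀‖ = 1)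
    {κ η : ℝ} (hκ : 0 < κ)
    (hfκ : ∀ g : StrongDual ℝ X, ‖g‖ < η → ‖f + g‖ + ‖f - g‖ ≤ 2 + κ * ‖g‖)
    {S : X →L[ℝ] Y} (hS : 0 < ‖S‖) (hSη : ‖S‖ * (2 + κ) ≤ κ * η / 4)
    (hSκ : ‖S‖ * (4 + 2 * κ) ≤ κ) :
    ∃ x : X, ‖x‖ ≤ 1 ∧
      ‖f.smulRight y₀ + S‖ + ‖f.smulRight y₀ - S‖ ≤ ‖y₀ + S x‖ + ‖y₀ - S x‖ + 5 * κ * ‖S‖ := by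
  have hν : 0 < κ * ‖S‖ := mul_pos hκ hS
  obtain ⟨x₁, hx₁, hfx₁, hplus⟩ := exists_norm_smulRight_add_le hf hy₀ S hν
  obtain ⟨x₂, hx₂, hfx₂, hminus⟩ := exists_norm_smulRight_add_le hf hy₀ (-S) hν
  simp only [norm_neg, ← sub_eq_add_neg, neg_apply] at hfx₂ hminus
  have hη : 0 < η := by nlinarith
  -- `x₁` and `x₂` lie in a thin slice of the unit ball determined by `f`, which has small
  -- diameter because `f` is a point of non-roughness.
  have hslice := StrongDual.add_add_mul_norm_sub_le hκ.le hfκ (half_pos hη).le (half_lt_self hη)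
    hx₁ hx₂
  have hx₁₂ : ‖x₁ - x₂‖ ≤ 2 * κ := by nlinarith
  have hSx : ‖y₀ - S x₂‖ ≤ ‖y₀ - S x₁‖ + 2 * κ * ‖S‖ := calc
    ‖y₀ - S x₂‖ ≤ ‖y₀ - S x₁‖ + ‖S (x₁ - x₂)‖ := by
      rw [map_sub]; exact norm_sub_le_norm_sub_add_norm_sub _ _ _
    _ ≤ ‖y₀ - S x₁‖ + 2 * κ * ‖S‖ := by
      gcongr
      exact (S.le_opNorm _).trans (by nlinarith)
  exact ⟨x₁, hx₁, by nlinarith⟩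

end Operators

theorem stmt10_general
    (X Y : Type*) [NormedAddCommGroup X] [NormedSpace ℝ X]
    [NormedAddCommGroup Y] [NormedSpace ℝ Y]
    (H : Submodule ℝ (X →L[ℝ] Y))
    (hHfin : ∀ T : X →L[ℝ] Y, FiniteDimensional ℝ (LinearMap.range (T : X →ₗ[ℝ] Y)) → T ∈ H)
    (δ : ℝ) (hδ : 0 < δ)
    (hH : IsRough H δ) (hX : NonRough (StrongDual ℝ X)) :
    IsRough Y δ := by
  refine isRough_of_forall_le hδ fun y₀ hy₀ e he heδ η hη => ?_
  by_contra! hY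
  set κ := e / 8 with hκe
  have hκ : 0 < κ := by positivity
  obtain ⟨f, hf, η₂, hη₂, hfκ⟩ :=
    exists_forall_norm_add_add_norm_sub_le_of_not_isRough fun h => hX ⟨κ, hκ, h⟩
  have hT : f.smulRight y₀ ∈ H :=
    hHfin _ (ContinuousLinearMap.finiteDimensional_range_smulRight (norm_ne_zero_iff.1
      (hf ▸ one_ne_zero)) y₀)
  have hTnorm : ‖(⟨f.smulRight y₀, hT⟩ : H)‖ = 1 := by
    rw [Submodule.coe_norm, ContinuousLinearMap.norm_smulRight_apply, hf, hy₀, one_mul]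
  have hη₃ : 0 < min η (min (κ * η₂ / 4 / (2 + κ)) (κ / (4 + 2 * κ))) := by positivity
  obtain ⟨S, hS, hSη₃, hTS⟩ := hH _ hTnorm κ hκ _ hη₃
  simp only [Submodule.coe_norm, Submodule.coe_add, Submodule.coe_sub, lt_min_iff] at hS hSη₃ hTS
  obtain ⟨hSη, hSη₂, hSκ⟩ := hSη₃
  obtain ⟨x, hx, hest⟩ := exists_norm_smulRight_add_add_norm_smulRight_sub_le hf hy₀ hκ hfκ hS
    ((lt_div_iff₀ (by positivity)).1 hSη₂).le ((lt_div_iff₀ (by positivity)).1 hSκ).le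
  have hSx : ‖(S : X →L[ℝ] Y) x‖ ≤ ‖(S : X →L[ℝ] Y)‖ := (S : X →L[ℝ] Y).unit_le_opNorm x hx
  have hYx := norm_add_add_norm_sub_le_of_forall_pos hy₀ hY (hSx.trans_lt hSη)
  have hSxδ : (δ - e) * ‖(S : X →L[ℝ] Y) x‖ ≤ (δ - e) * ‖(S : X →L[ℝ] Y)‖ :=
    mul_le_mul_of_nonneg_left hSx (sub_nonneg.2 heδ)
  have : (δ - κ) * ‖(S : X →L[ℝ] Y)‖ ≤ (δ - e + 5 * κ) * ‖(S : X →L[ℝ] Y)‖ := by linarith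
  linarith [le_of_mul_le_mul_right this hS]

theorem stmt10
    (X Y : Type*) [NormedAddCommGroup X] [NormedSpace ℝ X] [CompleteSpace X] [Nontrivial X]
    [NormedAddCommGroup Y] [NormedSpace ℝ Y] [CompleteSpace Y] [Nontrivial Y]
    (H : Submodule ℝ (X →L[ℝ] Y)) (hHclosed : IsClosed (H : Set (X →L[ℝ] Y)))
    (hHfin : ∀ T : X →L[ℝ] Y, FiniteDimensional ℝ (LinearMap.range (T : X →ₗ[ℝ] Y)) → T ∈ H)
    (δ : ℝ) (hδ : 0 < δ)
    (hH : IsRough H δ) (hX : NonRough (StrongDual ℝ X)) :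
    IsRough Y δ :=
  stmt10_general X Y H hHfin δ hδ hH hX
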